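/- arXiv:2002.10928 — 2 statements merged into one kernel-verified Lean document; each statement's English description precedes it below -/
import Mathlib

section
/- The set of pairs (P, Q) of Young diagrams of orders n and n−2 respectively satisfying: (a) Q satisfies a fixed system of homogeneous linear inequalities in its row lengths; (b) #P − #Q is even; (c) Q ⊆ P and P/Q has thickness at most 2; (d) no bridge of P/Q is longer than all other bridges combined (b_i ≤ (1/2)∑_j b_j for all i); is closed under componentwise (rowwise) addition. In particular, condition (d) can be expressed as a finite system of homogeneous linear inequalities in the row lengths of P and Q. -/
/-- A Young diagram of order `n`, given by its (weakly decreasing) row lengths,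
vanishing from row `n` on. Rows are indexed from `0`. -/
def IsYoung (n : ℕ) (P : ℕ → ℕ) : Prop :=
  (∀ i, P (i + 1) ≤ P i) ∧ ∀ i, n ≤ i → P i = 0

/-- The total number of boxes of a Young diagram of order `n`. -/
def ysize (n : ℕ) (P : ℕ → ℕ) : ℕ := ∑ i ∈ Finset.range n, P i

/-- The single-column Young diagram of height `i`. -/
def Col (i : ℕ) : ℕ → ℕ := fun r => if r < i then 1 else 0

/-- `P` is a nonzero primitive element of the submonoid `{R | S R}` of Young diagrams
under rowwise addition: it belongs to it, is nonzero, and is not the sum of two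
nonzero elements of it. -/
def PrimitiveIn (S : (ℕ → ℕ) → Prop) (P : ℕ → ℕ) : Prop :=
  S P ∧ P ≠ (fun _ => 0) ∧
  ∀ A B : ℕ → ℕ, S A → S B → A ≠ (fun _ => 0) → B ≠ (fun _ => 0) →
    P ≠ (fun r => A r + B r)

/-- The pair of inequalities (6.2.3.m) on the row lengths `p_i = P (i-1)`:
`-p₁ + ∑_{i=2}^{m+1} p_i - ∑_{i=m+2}^{2m} p_i ≥ 0` and
`-∑_{i=1}^{m-1} p_i + ∑_{i=m}^{2m-1} p_i - p_{2m} ≤ 0`. -/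
def RowIneq (m : ℕ) (P : ℕ → ℕ) : Prop :=
  0 ≤ -(P 0 : ℤ) + ∑ i ∈ Finset.Icc 2 (m + 1), (P (i - 1) : ℤ)
      - ∑ i ∈ Finset.Icc (m + 2) (2 * m), (P (i - 1) : ℤ) ∧
  -(∑ i ∈ Finset.Icc 1 (m - 1), (P (i - 1) : ℤ))
      + ∑ i ∈ Finset.Icc m (2 * m - 1), (P (i - 1) : ℤ) - (P (2 * m - 1) : ℤ) ≤ 0

/-- The height of the `j`-th column (columns indexed from `0`). -/
def colH (n : ℕ) (P : ℕ → ℕ) (j : ℕ) : ℕ :=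
  ((Finset.range n).filter (fun i => j < P i)).card

/-- The skew diagram `P/Q` has thickness at most `m`. -/
def ThickLE (n : ℕ) (P Q : ℕ → ℕ) (m : ℕ) : Prop :=
  ∀ j, colH n P j ≤ colH n Q j + m

/-- The length of the bridge at height `i` of the skew diagram `P/Q`: the number of
columns whose height in `Q` is `i-1` and in `P` is `i`. -/
def bridge (n : ℕ) (P Q : ℕ → ℕ) (i : ℕ) : ℕ :=
  ((Finset.range (P 0)).filter (fun j => colH n Q j = i - 1 ∧ colH n P j = i)).card

/-- The set of "good" pairs `(P, Q)`: `P`, `Q` are Young diagrams of orders `n`, `n-2`;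
`Q` satisfies the fixed system of homogeneous linear inequalities given by `c`;
`#P - #Q` is even; `Q ⊆ P` with `P/Q` of thickness at most `2`; and no bridge of
`P/Q` is longer than all the others combined. -/
def GoodPair (n : ℕ) {ι : Type*} (c : ι → ℕ → ℤ) (P Q : ℕ → ℕ) : Prop :=
  IsYoung n P ∧ IsYoung (n - 2) Q ∧
  (∀ t : ι, 0 ≤ ∑ i ∈ Finset.range n, c t i * (Q i : ℤ)) ∧
  Even ((ysize n P : ℤ) - (ysize (n - 2) Q : ℤ)) ∧
  (∀ i, Q i ≤ P i) ∧ ThickLE n P Q 2 ∧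
  (∀ i, 1 ≤ i → i ≤ n → 2 * bridge n P Q i ≤ ∑ j ∈ Finset.Icc 1 n, bridge n P Q j)


/-!
Under thickness at most `2` the bridges are intervals of columns,
`b_{k+1} = min (q_k, p_{k+1}) - max (q_{k+1}, p_{k+2})`, and writing `min` and `max` through
absolute values the sum of the bridges telescopes to `p_1 - ∑_k |q_k - p_{k+1}|`. So
`∑ b - 2 b_{k+1}` is a linear form minus the absolute values of the gaps `q_r - p_{r+1}` not
adjacent to bridge `k + 1`, and expanding these over all sign choices turns the no-majority
condition into finitely many homogeneous linear inequalities. Every other condition defining good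
pairs is additive as well, whence closure under rowwise addition.
-/

open Finset

lemma IsYoung.antitone {n : ℕ} {P : ℕ → ℕ} (h : IsYoung n P) : Antitone P :=
  antitone_nat_of_succ_le h.1

lemma IsYoung.mono {n m : ℕ} {P : ℕ → ℕ} (h : IsYoung n P) (hnm : n ≤ m) : IsYoung m P :=
  ⟨h.1, fun i hi => h.2 i (hnm.trans hi)⟩

lemma IsYoung.add {n : ℕ} {P P' : ℕ → ℕ} (h : IsYoung n P) (h' : IsYoung n P') :
    IsYoung n (fun r => P r + P' r) :=
  ⟨fun i => add_le_add (h.1 i) (h'.1 i), fun i hi => by simp [h.2 i hi, h'.2 i hi]⟩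

section ColumnHeight

variable {n : ℕ} {P : ℕ → ℕ}

lemma lt_colH_iff (hP : IsYoung n P) (i j : ℕ) : i < colH n P j ↔ j < P i := by
  constructor
  · intro hi
    by_contra! hPi
    have hsub : (range n).filter (fun a => j < P a) ⊆ range i := by
      intro a ha
      simp only [mem_filter, mem_range] at ha ⊢
      by_contra! hia
      exact absurd (hP.antitone hia) (by omega)
    have := card_le_card hsub
    rw [card_range] at this
    exact absurd hi (not_lt.2 this)
  · intro hj
    have hin : i < n := by
      by_contra! hni
      rw [hP.2 i hni] at hj
      exact absurd hj (Nat.not_lt_zero j)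
    have hsub : range (i + 1) ⊆ (range n).filter (fun a => j < P a) := by
      intro a ha
      simp only [mem_range, mem_filter] at ha ⊢
      exact ⟨by omega, hj.trans_le (hP.antitone (by omega))⟩
    have := card_le_card hsub
    rwa [card_range] at this

lemma colH_le_iff (hP : IsYoung n P) (i j : ℕ) : colH n P j ≤ i ↔ P i ≤ j := by
  rw [← not_lt, ← not_lt, lt_colH_iff hP]

lemma colH_eq_zero_iff (hP : IsYoung n P) (j : ℕ) : colH n P j = 0 ↔ P 0 ≤ j := by
  rw [← Nat.le_zero, colH_le_iff hP]

lemma colH_eq_succ_iff (hP : IsYoung n P) (j k : ℕ) :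
    colH n P j = k + 1 ↔ P (k + 1) ≤ j ∧ j < P k := by
  rw [← colH_le_iff hP, ← lt_colH_iff hP]
  omega

end ColumnHeight

lemma thickLE_iff {n m : ℕ} {P Q : ℕ → ℕ} (hP : IsYoung n P) (hQ : IsYoung n Q) :
    ThickLE n P Q m ↔ ∀ i, P (i + m) ≤ Q i := by
  constructor
  · intro hT i
    have hQi : colH n Q (Q i) ≤ i := (colH_le_iff hQ _ _).2 le_rfl
    exact (colH_le_iff hP _ _).1 ((hT (Q i)).trans (by omega))
  · intro hrow j
    exact (colH_le_iff hP _ _).2 ((hrow _).trans ((colH_le_iff hQ _ _).1 le_rfl))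

/-- The paper's `q_k` in 1-indexed rows, with `q_0 := p_1` standing in for `+∞`: every bridge
column is shorter than the first row of `P`, so the two agree in the bridge formula. -/
def qShift {α : Type*} (P Q : ℕ → α) : ℕ → α
  | 0 => P 0
  | k + 1 => Q k

@[simp]
lemma qShift_zero {α : Type*} (P Q : ℕ → α) : qShift P Q 0 = P 0 := rfl

@[simp]
lemma qShift_succ {α : Type*} (P Q : ℕ → α) (k : ℕ) : qShift P Q (k + 1) = Q k := rfl

section Bridge

variable {n : ℕ} {P Q : ℕ → ℕ}

lemma colH_eq_iff_of_lt (hQ : IsYoung n Q) {j : ℕ} (hj : j < P 0) (k : ℕ) :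
    colH n Q j = k ↔ Q k ≤ j ∧ j < qShift P Q k := by
  cases k with
  | zero => simpa [qShift, hj] using colH_eq_zero_iff hQ j
  | succ k => exact colH_eq_succ_iff hQ j k

lemma bridge_succ (hP : IsYoung n P) (hQ : IsYoung n Q) (k : ℕ) :
    bridge n P Q (k + 1) = min (qShift P Q k) (P k) - max (Q k) (P (k + 1)) := by
  rw [bridge, add_tsub_cancel_right, ← Nat.card_Ico]
  refine congrArg card (Finset.ext fun j => ?_)
  simp only [mem_filter, mem_range, mem_Ico, max_le_iff, lt_min_iff]
  constructor
  · rintro ⟨hj, hQj, hPj⟩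
    rw [colH_eq_iff_of_lt hQ hj] at hQj
    rw [colH_eq_succ_iff hP] at hPj
    exact ⟨⟨hQj.1, hPj.1⟩, hQj.2, hPj.2⟩
  · rintro ⟨⟨hQj, hPj⟩, hj, hj'⟩
    have hj0 : j < P 0 := hj'.trans_le (hP.antitone (Nat.zero_le k))
    rw [colH_eq_iff_of_lt hQ hj0, colH_eq_succ_iff hP]
    exact ⟨hj0, ⟨hQj, hj⟩, hPj, hj'⟩

lemma max_le_min_of_thick (hP : IsYoung n P) (hQ : IsYoung n Q) (hQP : ∀ i, Q i ≤ P i)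
    (hthick : ∀ i, P (i + 2) ≤ Q i) (k : ℕ) :
    max (Q k) (P (k + 1)) ≤ min (qShift P Q k) (P k) := by
  refine max_le (le_min ?_ (hQP k)) (le_min ?_ (hP.1 k))
  · cases k with
    | zero => exact hQP 0
    | succ k => exact hQ.1 k
  · cases k with
    | zero => exact hP.1 0
    | succ k => exact hthick k

lemma bridge_succ_int (hP : IsYoung n P) (hQ : IsYoung n Q) (hQP : ∀ i, Q i ≤ P i)
    (hthick : ∀ i, P (i + 2) ≤ Q i) (k : ℕ) :
    (bridge n P Q (k + 1) : ℤ)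
      = min ((qShift P Q k : ℕ) : ℤ) (P k) - max (Q k : ℤ) (P (k + 1)) := by
  rw [bridge_succ hP hQ, Nat.cast_sub (max_le_min_of_thick hP hQ hQP hthick k)]
  push_cast
  rfl

end Bridge

lemma Finset.sum_Icc_one_eq_sum_range {M : Type*} [AddCommMonoid M] (f : ℕ → M) (n : ℕ) :
    ∑ i ∈ Icc 1 n, f i = ∑ k ∈ range n, f (k + 1) := by
  rw [range_eq_Ico, sum_Ico_add']
  rfl

lemma sum_range_min_sub_max_succ {α : Type*} [AddCommGroup α] [LinearOrder α]
    [IsOrderedAddMonoid α] (x y : ℕ → α) (n : ℕ) :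
    ∑ k ∈ range n, (min (x k) (y k) - max (x (k + 1)) (y (k + 1)))
      = max (x 0) (y 0) - max (x n) (y n) - ∑ k ∈ range n, |x k - y k| := by
  have hterm : ∀ k, min (x k) (y k) - max (x (k + 1)) (y (k + 1))
      = (max (x k) (y k) - max (x (k + 1)) (y (k + 1))) - |x k - y k| := by
    intro k
    rw [abs_sub_comm, ← max_sub_min_eq_abs]
    abel
  rw [sum_congr rfl fun k _ => hterm k, sum_sub_distrib, sum_range_sub']

/-- The paper's `q_k - p_{k+1}` (rows indexed from `1` there, from `0` in `P` and `Q`). -/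
def rowGap (P Q : ℕ → ℕ) (k : ℕ) : ℤ := ((qShift P Q k : ℕ) : ℤ) - P k

section BridgeSum

variable {n : ℕ} {P Q : ℕ → ℕ}

lemma qShift_eq_zero (hP : IsYoung n P) (hQ : IsYoung (n - 1) Q) : qShift P Q n = 0 := by
  cases n with
  | zero => exact hP.2 0 le_rfl
  | succ m => exact hQ.2 m le_rfl

lemma sum_bridge (hP : IsYoung n P) (hQ : IsYoung (n - 1) Q) (hQP : ∀ i, Q i ≤ P i)
    (hthick : ∀ i, P (i + 2) ≤ Q i) :
    ∑ i ∈ Icc 1 n, (bridge n P Q i : ℤ)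
      = P 0 - ∑ k ∈ range (n + 1), |rowGap P Q k| := by
  have hQn : IsYoung n Q := hQ.mono (Nat.sub_le n 1)
  have hzero : qShift P Q n = 0 := qShift_eq_zero hP hQ
  have hPn : P n = 0 := hP.2 n le_rfl
  rw [sum_Icc_one_eq_sum_range]
  simp only [bridge_succ_int hP hQn hQP hthick]
  refine (sum_range_min_sub_max_succ (fun k => ((qShift P Q k : ℕ) : ℤ)) (fun k => (P k : ℤ))
    n).trans ?_
  simp [rowGap, sum_range_succ, hzero, hPn]

lemma sum_bridge_sub_two_mul_bridge (hP : IsYoung n P) (hQ : IsYoung (n - 1) Q)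
    (hQP : ∀ i, Q i ≤ P i) (hthick : ∀ i, P (i + 2) ≤ Q i) {k : ℕ} (hk : k < n) :
    ∑ i ∈ Icc 1 n, (bridge n P Q i : ℤ) - 2 * bridge n P Q (k + 1)
      = P 0 - ((qShift P Q k : ℕ) : ℤ) - P k + Q k + P (k + 1)
        - ∑ r ∈ ((range (n + 1)).erase k).erase (k + 1), |rowGap P Q r| := by
  have hsplit : ∑ r ∈ range (n + 1), |rowGap P Q r|
      = |rowGap P Q k| + (|rowGap P Q (k + 1)|
        + ∑ r ∈ ((range (n + 1)).erase k).erase (k + 1), |rowGap P Q r|) := by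
    rw [add_sum_erase _ (fun r => |rowGap P Q r|) (by simp; omega),
      add_sum_erase _ (fun r => |rowGap P Q r|) (by simp; omega)]
  rw [sum_bridge hP hQ hQP hthick, hsplit,
    bridge_succ_int hP (hQ.mono (Nat.sub_le n 1)) hQP hthick k]
  have hmin := min_add_max ((qShift P Q k : ℕ) : ℤ) (P k)
  have hmin_abs := max_sub_min_eq_abs' ((qShift P Q k : ℕ) : ℤ) (P k)
  have hmax := min_add_max (Q k : ℤ) (P (k + 1))
  have hmax_abs := max_sub_min_eq_abs' (Q k : ℤ) (P (k + 1))
  simp only [rowGap, qShift_succ] at hmin_abs hmax_abs ⊢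
  linarith

end BridgeSum

lemma nonneg_sub_sum_abs_iff {ι α : Type*} [DecidableEq ι] [AddCommGroup α] [LinearOrder α]
    [IsOrderedAddMonoid α] {s t : Finset ι} (hst : s ⊆ t) (a : α) (f : ι → α) :
    0 ≤ a - ∑ j ∈ s, |f j| ↔ ∀ σ ⊆ t, 0 ≤ a - ∑ j ∈ s, if j ∈ σ then f j else -f j := by
  constructor
  · intro h σ _
    refine h.trans (sub_le_sub_left (sum_le_sum fun j _ => ?_) a)
    split_ifs
    exacts [le_abs_self _, neg_le_abs _]
  · intro h
    convert h (s.filter fun j => 0 ≤ f j) ((filter_subset _ _).trans hst) using 3 with j hj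
    by_cases hfj : 0 ≤ f j
    · simp [hj, hfj, abs_of_nonneg]
    · simp [hj, hfj, abs_of_neg (not_le.1 hfj)]

/-- A linear form in the row lengths of `(P, Q)` is encoded by its coefficient sequences on the
rows of `P` and on the rows of `Q`. -/
def evalRows (n : ℕ) (P Q : ℕ → ℕ) : (ℕ → ℤ) × (ℕ → ℤ) →+ ℤ :=
  AddMonoidHom.mk'
    (fun f : (ℕ → ℤ) × (ℕ → ℤ) => ∑ i ∈ range n, f.1 i * P i + ∑ i ∈ range n, f.2 i * Q i)
    fun f g => by
      simp only [Prod.fst_add, Prod.snd_add, Pi.add_apply, add_mul, sum_add_distrib]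
      abel

def pRow (r : ℕ) : (ℕ → ℤ) × (ℕ → ℤ) := (Pi.single r 1, 0)

def qRow (r : ℕ) : (ℕ → ℤ) × (ℕ → ℤ) := (0, Pi.single r 1)

section LinearForms

variable {n : ℕ} {P Q : ℕ → ℕ}

lemma evalRows_apply (f : (ℕ → ℤ) × (ℕ → ℤ)) :
    evalRows n P Q f = ∑ i ∈ range n, f.1 i * P i + ∑ i ∈ range n, f.2 i * Q i := rfl

lemma evalRows_add_rows (P' Q' : ℕ → ℕ) (f : (ℕ → ℤ) × (ℕ → ℤ)) :
    evalRows n (fun r => P r + P' r) (fun r => Q r + Q' r) f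
      = evalRows n P Q f + evalRows n P' Q' f := by
  simp only [evalRows_apply, Nat.cast_add, mul_add, sum_add_distrib]
  abel

lemma evalRows_pRow (hP : ∀ i, n ≤ i → P i = 0) (r : ℕ) : evalRows n P Q (pRow r) = P r := by
  by_cases hr : r < n
  · simp [evalRows_apply, pRow, Pi.single_apply, hr]
  · simp [evalRows_apply, pRow, Pi.single_apply, hr, hP r (not_lt.1 hr)]

lemma evalRows_qRow (hQ : ∀ i, n ≤ i → Q i = 0) (r : ℕ) : evalRows n P Q (qRow r) = Q r := by
  by_cases hr : r < n
  · simp [evalRows_apply, qRow, Pi.single_apply, hr]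
  · simp [evalRows_apply, qRow, Pi.single_apply, hr, hQ r (not_lt.1 hr)]

end LinearForms

def gapForm (r : ℕ) : (ℕ → ℤ) × (ℕ → ℤ) := qShift pRow qRow r - pRow r

/-- The linear form `∑ b - 2 b_{k+1}`, once the absolute values of the gaps not adjacent to
bridge `k + 1` have been resolved with the signs `+` on `σ` and `-` off `σ`. -/
def bridgeForm (n k : ℕ) (σ : Finset ℕ) : (ℕ → ℤ) × (ℕ → ℤ) :=
  pRow 0 - qShift pRow qRow k - pRow k + qRow k + pRow (k + 1)
    - ∑ r ∈ ((range (n + 1)).erase k).erase (k + 1), if r ∈ σ then gapForm r else -gapForm r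

section BridgeForm

variable {n : ℕ} {P Q : ℕ → ℕ}

lemma evalRows_qShift (hP : ∀ i, n ≤ i → P i = 0) (hQ : ∀ i, n ≤ i → Q i = 0) (r : ℕ) :
    evalRows n P Q (qShift pRow qRow r) = qShift P Q r := by
  cases r with
  | zero => exact evalRows_pRow hP 0
  | succ r => exact evalRows_qRow hQ r

lemma evalRows_bridgeForm (hP : ∀ i, n ≤ i → P i = 0) (hQ : ∀ i, n ≤ i → Q i = 0)
    (k : ℕ) (σ : Finset ℕ) :
    evalRows n P Q (bridgeForm n k σ)
      = P 0 - ((qShift P Q k : ℕ) : ℤ) - P k + Q k + P (k + 1)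
        - ∑ r ∈ ((range (n + 1)).erase k).erase (k + 1),
            if r ∈ σ then rowGap P Q r else -rowGap P Q r := by
  simp only [bridgeForm, gapForm, rowGap, map_sub, map_add, map_sum, map_neg, apply_ite,
    evalRows_pRow hP, evalRows_qRow hQ, evalRows_qShift hP hQ]

lemma bridge_le_iff_forall_bridgeForm (hP : IsYoung n P) (hQ : IsYoung (n - 1) Q)
    (hQP : ∀ i, Q i ≤ P i) (hthick : ∀ i, P (i + 2) ≤ Q i) :
    (∀ i, 1 ≤ i → i ≤ n → 2 * bridge n P Q i ≤ ∑ j ∈ Icc 1 n, bridge n P Q j) ↔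
      ∀ k < n, ∀ σ ⊆ range (n + 1), 0 ≤ evalRows n P Q (bridgeForm n k σ) := by
  have hQn : IsYoung n Q := hQ.mono (Nat.sub_le n 1)
  have hbridge : ∀ k < n, 2 * bridge n P Q (k + 1) ≤ ∑ j ∈ Icc 1 n, bridge n P Q j ↔
      ∀ σ ⊆ range (n + 1), 0 ≤ evalRows n P Q (bridgeForm n k σ) := by
    intro k hk
    rw [← Nat.cast_le (α := ℤ), ← sub_nonneg]
    push_cast
    rw [sum_bridge_sub_two_mul_bridge hP hQ hQP hthick hk,
      nonneg_sub_sum_abs_iff ((erase_subset _ _).trans (erase_subset _ _))]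
    simp only [evalRows_bridgeForm hP.2 hQn.2]
  constructor
  · exact fun h k hk => (hbridge k hk).1 (h (k + 1) (Nat.le_add_left 1 k) hk)
  · intro h i hi hin
    obtain ⟨k, rfl⟩ : ∃ k, i = k + 1 := ⟨i - 1, by omega⟩
    exact (hbridge k hin).2 (h k hin)

end BridgeForm

theorem exists_linear_system_iff_bridge_le (n : ℕ) :
    ∃ (N : ℕ) (φ ψ : Fin N → ℕ → ℤ),
      ∀ P Q : ℕ → ℕ, IsYoung n P → IsYoung (n - 1) Q → (∀ i, Q i ≤ P i) →
        ThickLE n P Q 2 →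
        ((∀ i, 1 ≤ i → i ≤ n →
            2 * bridge n P Q i ≤ ∑ j ∈ Icc 1 n, bridge n P Q j) ↔
          ∀ t : Fin N, 0 ≤ ∑ i ∈ range n, φ t i * (P i : ℤ)
              + ∑ i ∈ range n, ψ t i * (Q i : ℤ)) := by
  let T := range n ×ˢ (range (n + 1)).powerset
  let form : Fin #T → (ℕ → ℤ) × (ℕ → ℤ) := fun t =>
    bridgeForm n (T.equivFin.symm t).1.1 (T.equivFin.symm t).1.2
  refine ⟨#T, fun t => (form t).1, fun t => (form t).2, fun P Q hP hQ hQP hth => ?_⟩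
  rw [bridge_le_iff_forall_bridgeForm hP hQ hQP
    ((thickLE_iff hP (hQ.mono (Nat.sub_le n 1))).1 hth)]
  refine ⟨fun h t => ?_, fun h k hk σ hσ => ?_⟩
  · have hmem := (T.equivFin.symm t).2
    simp only [T, mem_product, mem_range, mem_powerset] at hmem
    simpa only [evalRows_apply] using h _ hmem.1 _ hmem.2
  · simpa [T, form, evalRows_apply] using h (T.equivFin ⟨(k, σ), by simp [T, hk, hσ]⟩)

theorem GoodPair.add {n : ℕ} {ι : Type*} {c : ι → ℕ → ℤ} {P Q P' Q' : ℕ → ℕ}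
    (h : GoodPair n c P Q) (h' : GoodPair n c P' Q') :
    GoodPair n c (fun r => P r + P' r) (fun r => Q r + Q' r) := by
  obtain ⟨hP, hQ, hc, hev, hQP, hth, hbr⟩ := h
  obtain ⟨hP', hQ', hc', hev', hQP', hth', hbr'⟩ := h'
  have horder : n - 2 ≤ n - 1 := by omega
  have hthick := (thickLE_iff hP (hQ.mono (Nat.sub_le n 2))).1 hth
  have hthick' := (thickLE_iff hP' (hQ'.mono (Nat.sub_le n 2))).1 hth'
  have hQP_add : ∀ i, Q i + Q' i ≤ P i + P' i := fun i => add_le_add (hQP i) (hQP' i)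
  have hthick_add : ∀ i, P (i + 2) + P' (i + 2) ≤ Q i + Q' i :=
    fun i => add_le_add (hthick i) (hthick' i)
  refine ⟨hP.add hP', hQ.add hQ', fun t => ?_, ?_, hQP_add,
    (thickLE_iff (hP.add hP') ((hQ.add hQ').mono (Nat.sub_le n 2))).2 hthick_add, ?_⟩
  · simpa only [Nat.cast_add, mul_add, sum_add_distrib] using add_nonneg (hc t) (hc' t)
  · simpa only [ysize, Nat.cast_add, sum_add_distrib, add_sub_add_comm] using hev.add hev'
  · rw [bridge_le_iff_forall_bridgeForm hP (hQ.mono horder) hQP hthick] at hbr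
    rw [bridge_le_iff_forall_bridgeForm hP' (hQ'.mono horder) hQP' hthick'] at hbr'
    rw [bridge_le_iff_forall_bridgeForm (hP.add hP') ((hQ.add hQ').mono horder) hQP_add hthick_add]
    intro k hk σ hσ
    rw [evalRows_add_rows]
    exact add_nonneg (hbr k hk σ hσ) (hbr' k hk σ hσ)

theorem stmt_14_general (n : ℕ) {ι : Type*} (c : ι → ℕ → ℤ) :
    (∀ P Q P' Q' : ℕ → ℕ, GoodPair n c P Q → GoodPair n c P' Q' →
      GoodPair n c (fun r => P r + P' r) (fun r => Q r + Q' r)) ∧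
    (∃ (N : ℕ) (φ ψ : Fin N → ℕ → ℤ),
      ∀ P Q : ℕ → ℕ, IsYoung n P → IsYoung (n - 2) Q → (∀ i, Q i ≤ P i) →
        ThickLE n P Q 2 →
        ((∀ i, 1 ≤ i → i ≤ n →
            2 * bridge n P Q i ≤ ∑ j ∈ Finset.Icc 1 n, bridge n P Q j) ↔
          ∀ t : Fin N, 0 ≤ ∑ i ∈ Finset.range n, φ t i * (P i : ℤ)
              + ∑ i ∈ Finset.range n, ψ t i * (Q i : ℤ))) := by
  refine ⟨fun P Q P' Q' => GoodPair.add, ?_⟩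
  obtain ⟨N, φ, ψ, h⟩ := exists_linear_system_iff_bridge_le n
  exact ⟨N, φ, ψ, fun P Q hP hQ => h P Q hP (hQ.mono (by omega))⟩

/-- The set of good pairs is closed under rowwise addition; moreover the no-majority
bridge condition can be expressed, on pairs of Young diagrams with `P/Q` of thickness
at most `2`, as a finite system of homogeneous linear inequalities in the row lengths
of `P` and `Q`. -/
theorem stmt_14 (n : ℕ) (hn : 4 ≤ n) {ι : Type*} [Fintype ι] (c : ι → ℕ → ℤ) :
    (∀ P Q P' Q' : ℕ → ℕ, GoodPair n c P Q → GoodPair n c P' Q' →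
      GoodPair n c (fun r => P r + P' r) (fun r => Q r + Q' r)) ∧
    (∃ (N : ℕ) (φ ψ : Fin N → ℕ → ℤ),
      ∀ P Q : ℕ → ℕ, IsYoung n P → IsYoung (n - 2) Q → (∀ i, Q i ≤ P i) →
        ThickLE n P Q 2 →
        ((∀ i, 1 ≤ i → i ≤ n →
            2 * bridge n P Q i ≤ ∑ j ∈ Finset.Icc 1 n, bridge n P Q j) ↔
          ∀ t : Fin N, 0 ≤ ∑ i ∈ Finset.range n, φ t i * (P i : ℤ)
              + ∑ i ∈ Finset.range n, ψ t i * (Q i : ℤ))) :=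
  stmt_14_general n c
end

section
/- Let W be the Weyl group of a root system of type B_r, C_r, or D_r acting on ℝ^r with standard basis e_1,...,e_r, and let X = {−1,0,1}^r \ {0}. Define a section ξ: X → W by: for ν ∈ X corresponding to the strongly standard column C of height k (listing the nonzero coordinates as signed symbols in increasing order), ξ(ν) sends i to the i-th symbol of C for i ≤ k (except possibly i = r in type D), sends the remaining indices to the unused signed letters with increasing absolute values and negative signs (except possibly at i = r in type D, where the sign is determined by the determinant condition). Then ν lies in the Weyl chamber ξ(ν)·h^+ for every ν ∈ X, i.e., ξ is a section of the orbit map. -/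
/-!
The witness is `x = w⁻¹ν`, i.e. `x i = ε i * ν (σ i)`. The permutation `σ` sends the first `k`
indices into the support of `ν`, which has exactly `k` elements, so it sends the other indices
outside it. Together with the sign conditions this makes `x` the indicator vector of the first
`k` coordinates, except that in type `D` its last coordinate may be `±1`; such a vector is
dominant.
-/

/-- Encoding of the signed alphabet `1 < ⋯ < r < r̄ < ⋯ < 1̄` into `ℤ`: the letter `s`
is encoded by the integer `s`, the letter `s̄` by `-s`; `skey` gives the position of a
letter in the total order on the alphabet. -/
def skey (r : ℕ) (z : ℤ) : ℤ := if 0 < z then z else 2 * (r : ℤ) + 1 + z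

open Finset

theorem Equiv.apply_mem_filter_iff_lt_card {α : Type*} [Fintype α] {n : ℕ} (e : Fin n ≃ α)
    (p : α → Prop) [DecidablePred p] (h : ∀ i : Fin n, (i : ℕ) < #{a | p a} → p (e i))
    (i : Fin n) : p (e i) ↔ (i : ℕ) < #{a | p a} := by
  refine ⟨fun hi => ?_, h i⟩
  have hcard : #{j : Fin n | p (e j)} = #{a | p a} := by
    rw [← card_map e.toEmbedding, map_filter]; simp
  have hle : #{a | p a} ≤ n := hcard ▸ (card_filter_le _ _).trans (by simp)
  have hprefix :
      ({j | (j : ℕ) < #{a | p a}} : Finset (Fin n)) = ({j | p (e j)} : Finset (Fin n)) := by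
    refine eq_of_subset_of_card_le (fun j hj => ?_) ?_
    · simpa using h j (by simpa using hj)
    · rw [hcard, Fin.card_filter_val_lt]; omega
  simpa using hprefix.ge ((mem_filter_univ i).mpr hi)

theorem stmt_16_general (r : ℕ) (hr : 0 < r) (D : Bool)
    (ν : Fin r → ℤ) (hν1 : ∀ i, ν i = -1 ∨ ν i = 0 ∨ ν i = 1)
    (k : ℕ) (hk : k = (Finset.univ.filter (fun s => ν s ≠ 0)).card)
    (σ : Equiv.Perm (Fin r)) (ε : Fin r → ℤ) (hε : ∀ i, ε i = 1 ∨ ε i = -1)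
    (hsupp : ∀ i : Fin r, (i : ℕ) < k → ν (σ i) ≠ 0)
    (hsign : ∀ i : Fin r, (i : ℕ) < k → ((i : ℕ) + 1 ≠ r ∨ D = false) → ε i = ν (σ i)) :
    ∃ x : Fin r → ℤ,
      (∀ i j : Fin r, i ≤ j → ((j : ℕ) + 1 < r ∨ D = false) → x j ≤ x i) ∧
      (D = false → ∀ i, 0 ≤ x i) ∧
      (D = true → ∀ i : Fin r, (i : ℕ) + 1 < r →
        x ⟨r - 1, Nat.sub_lt hr one_pos⟩ ≤ x i ∧ -x ⟨r - 1, Nat.sub_lt hr one_pos⟩ ≤ x i) ∧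
      (∀ i : Fin r, ν i = ε (σ.symm i) * x (σ.symm i)) := by
  have hε_sq (i : Fin r) : ε i * ε i = 1 := Int.isUnit_mul_self (Int.isUnit_iff.mpr (hε i))
  have hsupp_iff (i : Fin r) : ν (σ i) ≠ 0 ↔ (i : ℕ) < k := by
    subst hk
    exact σ.apply_mem_filter_iff_lt_card (ν · ≠ 0) hsupp i
  have hprefix (i : Fin r) (hi : (i : ℕ) + 1 ≠ r ∨ D = false) :
      ε i * ν (σ i) = if (i : ℕ) < k then 1 else 0 := by
    split_ifs with hik
    · rw [← hsign i hik hi, hε_sq]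
    · rw [not_not.mp (mt (hsupp_iff i).mp hik), mul_zero]
  have habs (i : Fin r) : |ε i * ν (σ i)| ≤ if (i : ℕ) < k then 1 else 0 := by
    split_ifs with hik
    · rcases hε i with h | h <;> rcases hν1 (σ i) with h' | h' | h' <;> simp [h, h']
    · rw [not_not.mp (mt (hsupp_iff i).mp hik), mul_zero, abs_zero]
  refine ⟨fun i => ε i * ν (σ i), fun i j hij hj => ?_, fun hD i => ?_, fun hD i hi => ?_,
    fun i => ?_⟩ <;> dsimp only
  · have hij' : (i : ℕ) ≤ j := hij
    rw [hprefix i (hj.imp_left (by omega)), hprefix j (hj.imp_left (by omega))]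
    split_ifs <;> omega
  · rw [hprefix i (.inr hD)]
    split_ifs <;> omega
  · have hlast := abs_le.mp (habs ⟨r - 1, Nat.sub_lt hr one_pos⟩)
    rw [hprefix i (.inl hi.ne)]
    simp only at hlast
    split_ifs at hlast ⊢ <;> omega
  · rw [σ.apply_symm_apply, ← mul_assoc, hε_sq, one_mul]

/-- The section `ξ : X → W` of the orbit map is indeed a section. Here `W` is the Weyl
group of type `B_r`/`C_r` (`D = false`: all signed permutations) or `D_r` (`D = true`:
signed permutations with an even number of sign changes), an element `w` of which is
encoded by a permutation `σ` of `Fin r` together with signs `ε` (so `w·e_i = ε i •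
e_{σ i}`).  Given a nonzero vector `ν` with coordinates in `{-1,0,1}`, whose associated
strongly standard column has height `k`, any `w = (σ, ε)` satisfying the defining
conditions of `ξ(ν)` — the first `k` letters `w·1, …, w·k` are the symbols of the
column of `ν` in increasing order (except possibly the sign at position `r` in type
`D`), and the remaining letters have increasing absolute values and negative signs
(except possibly the sign at position `r` in type `D`) — satisfies `ν ∈ w·h⁺`. -/
theorem stmt_16 (r : ℕ) (hr : 0 < r) (D : Bool) (hD2 : D = true → 2 ≤ r)
    (ν : Fin r → ℤ) (hν1 : ∀ i, ν i = -1 ∨ ν i = 0 ∨ ν i = 1) (hν0 : ν ≠ 0)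
    (k : ℕ) (hk : k = (Finset.univ.filter (fun s => ν s ≠ 0)).card)
    (σ : Equiv.Perm (Fin r)) (ε : Fin r → ℤ) (hε : ∀ i, ε i = 1 ∨ ε i = -1)
    (hW : D = true → Even ((Finset.univ.filter (fun i => ε i = -1)).card))
    (hsupp : ∀ i : Fin r, (i : ℕ) < k → ν (σ i) ≠ 0)
    (hsign : ∀ i : Fin r, (i : ℕ) < k → ((i : ℕ) + 1 ≠ r ∨ D = false) → ε i = ν (σ i))
    (hord : ∀ i i' : Fin r, i < i' → (i' : ℕ) < k →
      skey r (ε i * (((σ i : ℕ) : ℤ) + 1)) < skey r (ε i' * (((σ i' : ℕ) : ℤ) + 1)))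
    (htord : ∀ i i' : Fin r, k ≤ (i : ℕ) → i < i' → σ i < σ i')
    (htsign : ∀ i : Fin r, k ≤ (i : ℕ) → ((i : ℕ) + 1 ≠ r ∨ D = false) → ε i = -1) :
    ∃ x : Fin r → ℤ,
      (∀ i j : Fin r, i ≤ j → ((j : ℕ) + 1 < r ∨ D = false) → x j ≤ x i) ∧
      (D = false → ∀ i, 0 ≤ x i) ∧
      (D = true → ∀ i : Fin r, (i : ℕ) + 1 < r →
        x ⟨r - 1, Nat.sub_lt hr one_pos⟩ ≤ x i ∧ -x ⟨r - 1, Nat.sub_lt hr one_pos⟩ ≤ x i) ∧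
      (∀ i : Fin r, ν i = ε (σ.symm i) * x (σ.symm i)) :=
  stmt_16_general r hr D ν hν1 k hk σ ε hε hsupp hsign
end
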